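/- arXiv:2301.13734 — 2 statements merged into one kernel-verified Lean document; each statement's English description precedes it below -/
import Mathlib

section
/- In a finite-horizon MDP, for any μ ∈ Λ and any t ∈ {0,…,T−2}, the conditional variance of the PDIS estimator satisfies the recursion: Var(G^PDIS(τ^{μ_{t:T−1}}_{t:T−1}) | S_t) = E_{A_t∼μ_t}[ρ_t²·( E_{S_{t+1}}[Var(G^PDIS(τ^{μ_{t+1:T−1}}_{t+1:T−1}) | S_{t+1}) | S_t, A_t] + ν_{π,t}(S_t,A_t) + q_{π,t}(S_t,A_t)² ) | S_t] − v_{π,t}(S_t)², where ν_{π,t}(s,a) = Var_{S_{t+1}∼p(·|s,a)}(v_{π,t+1}(S_{t+1})). -/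
open Finset

def Traj (S A : Type) : ℕ → Type
  | 0 => PUnit
  | n+1 => A × S × Traj S A n

instance trajFintype (S A : Type) [Fintype S] [Fintype A] : (n : ℕ) → Fintype (Traj S A n)
  | 0 => inferInstanceAs (Fintype PUnit)
  | n+1 => letI := trajFintype S A n; inferInstanceAs (Fintype (A × S × Traj S A n))

/-- Probability of a trajectory segment of `n` steps starting at time `t` in state `s`,
under behavior policy `b` and transition kernel `p`. -/
noncomputable def trajP {S A : Type} (b : ℕ → S → A → ℝ) (p : S → A → S → ℝ) :
    (n : ℕ) → ℕ → S → Traj S A n → ℝ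
  | 0, _, _, _ => 1
  | n+1, t, s, (a, s', τ) => b t s a * p s a s' * trajP b p n (t+1) s' τ

/-- Per-decision importance sampling return of a trajectory segment, with target policy `π`,
behavior policy `b`, and (deterministic) reward function `r`. -/
noncomputable def pdis {S A : Type} (π b : ℕ → S → A → ℝ) (r : S → A → ℝ) :
    (n : ℕ) → ℕ → S → Traj S A n → ℝ
  | 0, _, _, _ => 0
  | n+1, t, s, (a, s', τ) => (π t s a / b t s a) * (r s a + pdis π b r n (t+1) s' τ)

/-- On-policy (undiscounted) return of a trajectory segment. -/
noncomputable def retG {S A : Type} (r : S → A → ℝ) : (n : ℕ) → S → Traj S A n → ℝ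
  | 0, _, _ => 0
  | n+1, s, (a, s', τ) => r s a + retG r n s' τ

/-- Expectation of a trajectory functional, conditioned on `S_t = s`. -/
noncomputable def Ex {S A : Type} [Fintype S] [Fintype A] (b : ℕ → S → A → ℝ)
    (p : S → A → S → ℝ) (n t : ℕ) (s : S) (f : Traj S A n → ℝ) : ℝ :=
  ∑ τ : Traj S A n, trajP b p n t s τ * f τ

/-- Variance of a trajectory functional, conditioned on `S_t = s`. -/
noncomputable def VarTraj {S A : Type} [Fintype S] [Fintype A] (b : ℕ → S → A → ℝ)
    (p : S → A → S → ℝ) (n t : ℕ) (s : S) (f : Traj S A n → ℝ) : ℝ :=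
  Ex b p n t s (fun τ => (f τ)^2) - (Ex b p n t s f)^2

/-- `ν_{π,t}(s,a)`: variance of the next-state value. -/
noncomputable def nuF {S A : Type} [Fintype S] (p : S → A → S → ℝ) (v : ℕ → S → ℝ)
    (t : ℕ) (s : S) (a : A) : ℝ :=
  (∑ s', p s a s' * (v (t+1) s')^2) - (∑ s', p s a s' * v (t+1) s')^2

lemma sum_traj_succ {S A : Type} [Fintype S] [Fintype A] (n : ℕ) (f : Traj S A (n+1) → ℝ) :
    ∑ τ : Traj S A (n+1), f τ = ∑ a : A, ∑ s' : S, ∑ τ : Traj S A n, f (a, s', τ) := by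
  exact (Fintype.sum_prod_type f).trans (Finset.sum_congr rfl fun a _ =>
    Fintype.sum_prod_type _)

lemma sum_traj_zero {S A : Type} [Fintype S] [Fintype A] (f : Traj S A 0 → ℝ) :
    ∑ τ : Traj S A 0, f τ = f PUnit.unit := by
  letI : Unique (Traj S A 0) := inferInstanceAs (Unique PUnit)
  exact Fintype.sum_unique f

lemma trajP_sum {S A : Type} [Fintype S] [Fintype A]
    (μ : ℕ → S → A → ℝ) (p : S → A → S → ℝ)
    (hμ1 : ∀ t s, ∑ a, μ t s a = 1) (hp1 : ∀ s a, ∑ s', p s a s' = 1) :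
    ∀ (n t : ℕ) (s : S), ∑ τ : Traj S A n, trajP μ p n t s τ = 1 := by
  intro n
  induction n with
  | zero => intro t s; rw [sum_traj_zero]; rfl
  | succ n ih =>
    intro t s
    rw [sum_traj_succ]
    have h1 : ∀ a : A, ∑ s' : S, ∑ τ : Traj S A n,
        trajP μ p (n+1) t s (a, s', τ) = μ t s a := by
      intro a
      have h2 : ∀ s' : S, ∑ τ : Traj S A n, trajP μ p (n+1) t s (a, s', τ)
          = μ t s a * p s a s' := by
        intro s'
        show ∑ τ : Traj S A n, μ t s a * p s a s' * trajP μ p n (t+1) s' τ = _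
        rw [← Finset.mul_sum, ih (t+1) s', mul_one]
      rw [Finset.sum_congr rfl fun s' _ => h2 s', ← Finset.mul_sum, hp1, mul_one]
    rw [Finset.sum_congr rfl fun a _ => h1 a, hμ1]

lemma ex_pdis {S A : Type} [Fintype S] [Fintype A]
    (T : ℕ) (p : S → A → S → ℝ) (r : S → A → ℝ) (π μ : ℕ → S → A → ℝ)
    (v : ℕ → S → ℝ) (q : ℕ → S → A → ℝ)
    (hp1 : ∀ s a, ∑ s', p s a s' = 1)
    (hμ1 : ∀ t s, ∑ a, μ t s a = 1)
    (hvT : ∀ s, v T s = 0)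
    (hq : ∀ t, t < T → ∀ s a, q t s a = r s a + ∑ s', p s a s' * v (t+1) s')
    (hv : ∀ t, t < T → ∀ s, v t s = ∑ a, π t s a * q t s a)
    (hcov : ∀ t, t < T → ∀ s a, μ t s a = 0 → π t s a * q t s a = 0) :
    ∀ (n t : ℕ), t + n = T → ∀ s : S,
      Ex μ p n t s (pdis π μ r n t s) = v t s := by
  intro n
  induction n with
  | zero =>
    intro t ht s
    have hT : T = t := by omega
    subst hT
    unfold Ex
    rw [sum_traj_zero, hvT]
    show (1 : ℝ) * 0 = 0
    ring
  | succ n ih =>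
    intro t ht s
    have htT : t < T := by omega
    unfold Ex
    rw [sum_traj_succ]
    have key : ∀ a : A, ∑ s' : S, ∑ τ : Traj S A n,
        trajP μ p (n+1) t s (a, s', τ) * pdis π μ r (n+1) t s (a, s', τ)
        = π t s a * q t s a := by
      intro a
      by_cases hμa : μ t s a = 0
      · have : ∀ s' : S, ∑ τ : Traj S A n,
            trajP μ p (n+1) t s (a, s', τ) * pdis π μ r (n+1) t s (a, s', τ) = 0 := by
          intro s'
          apply Finset.sum_eq_zero
          intro τ _
          show μ t s a * p s a s' * trajP μ p n (t+1) s' τ *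
            ((π t s a / μ t s a) * (r s a + pdis π μ r n (t+1) s' τ)) = 0
          rw [hμa]; ring
        rw [Finset.sum_congr rfl fun s' _ => this s', Finset.sum_const, smul_zero,
          hcov t htT s a hμa]
      · have h2 : ∀ s' : S, ∑ τ : Traj S A n,
            trajP μ p (n+1) t s (a, s', τ) * pdis π μ r (n+1) t s (a, s', τ)
            = π t s a * (p s a s' * (r s a + v (t+1) s')) := by
          intro s'
          have hinner : ∑ τ : Traj S A n, trajP μ p n (t+1) s' τ *
              (r s a + pdis π μ r n (t+1) s' τ)
              = r s a + v (t+1) s' := by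
            have := ih (t+1) (by omega) s'
            unfold Ex at this
            calc ∑ τ : Traj S A n, trajP μ p n (t+1) s' τ *
                  (r s a + pdis π μ r n (t+1) s' τ)
                = ∑ τ : Traj S A n, (trajP μ p n (t+1) s' τ * r s a +
                    trajP μ p n (t+1) s' τ * pdis π μ r n (t+1) s' τ) := by
                  apply Finset.sum_congr rfl; intro τ _; ring
              _ = (∑ τ : Traj S A n, trajP μ p n (t+1) s' τ) * r s a +
                    (∑ τ : Traj S A n, trajP μ p n (t+1) s' τ * pdis π μ r n (t+1) s' τ) := by
                  rw [Finset.sum_add_distrib, Finset.sum_mul]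
              _ = r s a + v (t+1) s' := by
                  rw [trajP_sum μ p hμ1 hp1, this, one_mul]
          calc ∑ τ : Traj S A n,
                trajP μ p (n+1) t s (a, s', τ) * pdis π μ r (n+1) t s (a, s', τ)
              = ∑ τ : Traj S A n, (μ t s a * (π t s a / μ t s a) * p s a s') *
                  (trajP μ p n (t+1) s' τ * (r s a + pdis π μ r n (t+1) s' τ)) := by
                apply Finset.sum_congr rfl; intro τ _
                show μ t s a * p s a s' * trajP μ p n (t+1) s' τ *
                  ((π t s a / μ t s a) * (r s a + pdis π μ r n (t+1) s' τ)) = _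
                ring
            _ = (μ t s a * (π t s a / μ t s a) * p s a s') * (r s a + v (t+1) s') := by
                rw [← Finset.mul_sum, hinner]
            _ = π t s a * (p s a s' * (r s a + v (t+1) s')) := by
                field_simp
        rw [Finset.sum_congr rfl fun s' _ => h2 s', ← Finset.mul_sum, hq t htT]
        congr 1
        have : ∑ s' : S, p s a s' * (r s a + v (t+1) s')
            = (∑ s' : S, p s a s') * r s a + ∑ s' : S, p s a s' * v (t+1) s' := by
          rw [Finset.sum_mul, ← Finset.sum_add_distrib]
          apply Finset.sum_congr rfl; intro s' _; ring
        rw [this, hp1, one_mul]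
    rw [Finset.sum_congr rfl fun a _ => key a, ← hv t htT]

/-- Recursive decomposition of the conditional variance of the PDIS estimator
for `t ≤ T - 2` (law of total variance). -/
theorem pdis_variance_recursion {S A : Type} [Fintype S] [Fintype A]
    (T : ℕ) (p : S → A → S → ℝ) (r : S → A → ℝ) (π μ : ℕ → S → A → ℝ)
    (v : ℕ → S → ℝ) (q : ℕ → S → A → ℝ)
    (hp0 : ∀ s a s', 0 ≤ p s a s') (hp1 : ∀ s a, ∑ s', p s a s' = 1)
    (hπ0 : ∀ t s a, 0 ≤ π t s a) (hπ1 : ∀ t s, ∑ a, π t s a = 1)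
    (hμ0 : ∀ t s a, 0 ≤ μ t s a) (hμ1 : ∀ t s, ∑ a, μ t s a = 1)
    (hvT : ∀ s, v T s = 0)
    (hq : ∀ t, t < T → ∀ s a, q t s a = r s a + ∑ s', p s a s' * v (t+1) s')
    (hv : ∀ t, t < T → ∀ s, v t s = ∑ a, π t s a * q t s a)
    (hcov : ∀ t, t < T → ∀ s a, μ t s a = 0 → π t s a * q t s a = 0) :
    ∀ t, t + 1 < T → ∀ s,
      VarTraj μ p (T - t) t s (pdis π μ r (T - t) t s)
        = (∑ a, μ t s a * (π t s a / μ t s a) ^ 2 *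
            ((∑ s', p s a s' *
                VarTraj μ p (T - (t+1)) (t+1) s' (pdis π μ r (T - (t+1)) (t+1) s'))
              + nuF p v t s a + (q t s a) ^ 2))
          - (v t s) ^ 2 := by
  intro t ht s
  obtain ⟨m, hm⟩ : ∃ m, T - (t+1) = m := ⟨_, rfl⟩
  have hTt : T - t = m + 1 := by omega
  have htT : t < T := by omega
  rw [hTt, hm]
  unfold VarTraj
  rw [ex_pdis T p r π μ v q hp1 hμ1 hvT hq hv hcov (m+1) t (by omega) s]
  congr 1
  unfold Ex
  rw [sum_traj_succ]
  apply Finset.sum_congr rfl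
  intro a _
  by_cases hμa : μ t s a = 0
  · have h0 : ∀ s' : S, ∑ τ : Traj S A m,
        trajP μ p (m+1) t s (a, s', τ) * (pdis π μ r (m+1) t s (a, s', τ))^2 = 0 := by
      intro s'
      apply Finset.sum_eq_zero
      intro τ _
      show μ t s a * p s a s' * trajP μ p m (t+1) s' τ *
        ((π t s a / μ t s a) * (r s a + pdis π μ r m (t+1) s' τ))^2 = 0
      rw [hμa]; ring
    rw [Finset.sum_congr rfl fun s' _ => h0 s', hμa]
    simp
  · have hstep : ∀ s' : S, ∑ τ : Traj S A m,
        trajP μ p (m+1) t s (a, s', τ) * (pdis π μ r (m+1) t s (a, s', τ))^2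
        = μ t s a * (π t s a / μ t s a)^2 *
          (p s a s' * (VarTraj μ p m (t+1) s' (pdis π μ r m (t+1) s')
            + (r s a + v (t+1) s')^2)) := by
      intro s'
      have hEg : Ex μ p m (t+1) s' (pdis π μ r m (t+1) s') = v (t+1) s' :=
        ex_pdis T p r π μ v q hp1 hμ1 hvT hq hv hcov m (t+1) (by omega) s'
      have hS1 : ∑ τ : Traj S A m, trajP μ p m (t+1) s' τ * pdis π μ r m (t+1) s' τ
          = v (t+1) s' := hEg
      have hstep2 : ∑ τ : Traj S A m, trajP μ p m (t+1) s' τ *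
          (r s a + pdis π μ r m (t+1) s' τ)^2
          = VarTraj μ p m (t+1) s' (pdis π μ r m (t+1) s') + (r s a + v (t+1) s')^2 := by
        have expand : ∀ τ : Traj S A m,
            trajP μ p m (t+1) s' τ * (r s a + pdis π μ r m (t+1) s' τ)^2
            = trajP μ p m (t+1) s' τ * (r s a)^2
              + (2 * r s a) * (trajP μ p m (t+1) s' τ * pdis π μ r m (t+1) s' τ)
              + trajP μ p m (t+1) s' τ * (pdis π μ r m (t+1) s' τ)^2 := by
          intro τ; ring
        rw [Finset.sum_congr rfl fun τ _ => expand τ, Finset.sum_add_distrib,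
          Finset.sum_add_distrib, ← Finset.sum_mul, trajP_sum μ p hμ1 hp1,
          ← Finset.mul_sum, hS1]
        unfold VarTraj Ex
        rw [hS1]
        ring
      calc ∑ τ : Traj S A m,
            trajP μ p (m+1) t s (a, s', τ) * (pdis π μ r (m+1) t s (a, s', τ))^2
          = ∑ τ : Traj S A m, (μ t s a * (π t s a / μ t s a)^2 * p s a s') *
              (trajP μ p m (t+1) s' τ * (r s a + pdis π μ r m (t+1) s' τ)^2) := by
            apply Finset.sum_congr rfl; intro τ _
            show μ t s a * p s a s' * trajP μ p m (t+1) s' τ *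
              ((π t s a / μ t s a) * (r s a + pdis π μ r m (t+1) s' τ))^2 = _
            ring
        _ = (μ t s a * (π t s a / μ t s a)^2 * p s a s') *
              (VarTraj μ p m (t+1) s' (pdis π μ r m (t+1) s') + (r s a + v (t+1) s')^2) := by
            rw [← Finset.mul_sum, hstep2]
        _ = _ := by ring
    rw [Finset.sum_congr rfl fun s' _ => hstep s', ← Finset.mul_sum]
    congr 1
    have e1 : ∀ s' : S, p s a s' *
        (VarTraj μ p m (t+1) s' (pdis π μ r m (t+1) s') + (r s a + v (t+1) s')^2)
        = p s a s' * VarTraj μ p m (t+1) s' (pdis π μ r m (t+1) s')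
          + (r s a)^2 * p s a s'
          + (2 * r s a) * (p s a s' * v (t+1) s')
          + p s a s' * (v (t+1) s')^2 := by
      intro s'; ring
    rw [Finset.sum_congr rfl fun s' _ => e1 s', Finset.sum_add_distrib,
      Finset.sum_add_distrib, Finset.sum_add_distrib, ← Finset.mul_sum,
      ← Finset.mul_sum, hp1, hq t htT]
    simp only [nuF, VarTraj, Ex]
    ring
end

section
/- Define the behavior policy μ̂_t(a|s) ∝ π_t(a|s)√(q̂_{π,t}(s,a)) when some π_t(a₀|s)√(q̂_{π,t}(s,a₀)) ≠ 0 (uniform otherwise). Then for all t and s, the PDIS estimator under μ̂ has variance no larger than the on-policy Monte Carlo estimator: Var(G^PDIS(τ^{μ̂_{t:T−1}}_{t:T−1}) | S_t = s) ≤ Var(G_t | S_t = s) where G_t is the on-policy return under π. Moreover Var(G^PDIS(τ^{μ̂_{t:T−1}}_{t:T−1}) | S_t = s) = (∑_a π_t(a|s)√(q̂_{π,t}(s,a)))² − v_{π,t}(s)² at t = T−1. -/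
open Finset

set_option linter.unusedSectionVars false
section Infra
variable {S A : Type} [Fintype S] [Fintype A]

lemma Ex_zero (b : ℕ → S → A → ℝ) (p : S → A → S → ℝ) (t : ℕ) (s : S) (f : Traj S A 0 → ℝ) :
    Ex b p 0 t s f = f PUnit.unit := by
  show (∑ x : PUnit, trajP b p 0 t s x * f x) = _
  simp [trajP]
  exact Finset.sum_singleton _ _

lemma Ex_succ (b : ℕ → S → A → ℝ) (p : S → A → S → ℝ) (n t : ℕ) (s : S)
    (f : Traj S A (n+1) → ℝ) :
    Ex b p (n+1) t s f
      = ∑ a, ∑ s', b t s a * p s a s' * Ex b p n (t+1) s' (fun τ => f (a, s', τ)) := by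
  show (∑ x : A × S × Traj S A n, trajP b p (n+1) t s x * f x) = _
  rw [Fintype.sum_prod_type]
  refine Finset.sum_congr rfl fun a _ => ?_
  rw [Fintype.sum_prod_type]
  refine Finset.sum_congr rfl fun s' _ => ?_
  simp only [Ex, trajP, Finset.mul_sum, mul_assoc]

lemma trajP_sum_one (b : ℕ → S → A → ℝ) (p : S → A → S → ℝ)
    (hb1 : ∀ t s, ∑ a, b t s a = 1) (hp1 : ∀ s a, ∑ s', p s a s' = 1) :
    ∀ n t s, ∑ τ : Traj S A n, trajP b p n t s τ = 1 := by
  intro n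
  induction n with
  | zero =>
    intro t s
    show (∑ x : PUnit, trajP b p 0 t s x) = 1
    simp [trajP]
  | succ n ih =>
    intro t s
    have : (∑ τ : Traj S A (n+1), trajP b p (n+1) t s τ)
        = ∑ a, ∑ s', b t s a * p s a s' * ∑ τ : Traj S A n, trajP b p n (t+1) s' τ := by
      have h := Ex_succ b p n t s (fun _ => 1)
      simp only [Ex, mul_one] at h
      exact h
    rw [this]
    have : ∀ a : A, ∀ s' : S, b t s a * p s a s' * ∑ τ : Traj S A n, trajP b p n (t+1) s' τ
        = b t s a * p s a s' := by intro a s'; rw [ih]; ring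
    simp only [this]
    rw [Finset.sum_congr rfl fun a _ => (by rw [← Finset.mul_sum, hp1, mul_one] :
      (∑ s', b t s a * p s a s') = b t s a)]
    exact hb1 t s

lemma Ex_add (b : ℕ → S → A → ℝ) (p : S → A → S → ℝ) (n t : ℕ) (s : S)
    (f g : Traj S A n → ℝ) :
    Ex b p n t s (fun τ => f τ + g τ) = Ex b p n t s f + Ex b p n t s g := by
  simp [Ex, mul_add, Finset.sum_add_distrib]

lemma Ex_const_mul (b : ℕ → S → A → ℝ) (p : S → A → S → ℝ) (n t : ℕ) (s : S)
    (c : ℝ) (f : Traj S A n → ℝ) :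
    Ex b p n t s (fun τ => c * f τ) = c * Ex b p n t s f := by
  simp [Ex, Finset.mul_sum]; refine Finset.sum_congr rfl fun τ _ => by ring

end Infra
section Helpers
open scoped Classical
variable {S A : Type} [Fintype S] [Fintype A]

lemma Ex_const (b : ℕ → S → A → ℝ) (p : S → A → S → ℝ)
    (hb1 : ∀ t s, ∑ a, b t s a = 1) (hp1 : ∀ s a, ∑ s', p s a s' = 1)
    (n t : ℕ) (s : S) (c : ℝ) :
    Ex b p n t s (fun _ => c) = c := by
  unfold Ex
  rw [← Finset.sum_mul, trajP_sum_one b p hb1 hp1, one_mul]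

lemma jensen_sq (w x : A → ℝ) (hw : ∀ a, 0 ≤ w a) (hw1 : ∑ a, w a = 1) :
    (∑ a, w a * x a) ^ 2 ≤ ∑ a, w a * x a ^ 2 := by
  have := Finset.sum_sq_le_sum_mul_sum_of_sq_eq_mul (Finset.univ : Finset A)
    (r := fun a => w a * x a) (f := fun a => w a) (g := fun a => w a * x a ^ 2)
    (fun a _ => hw a) (fun a _ => mul_nonneg (hw a) (sq_nonneg _))
    (fun a _ => by ring)
  rwa [hw1, one_mul] at this

lemma jensen_sq' (w x : S → ℝ) (hw : ∀ a, 0 ≤ w a) (hw1 : ∑ a, w a = 1) :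
    (∑ a, w a * x a) ^ 2 ≤ ∑ a, w a * x a ^ 2 := by
  have := Finset.sum_sq_le_sum_mul_sum_of_sq_eq_mul (Finset.univ : Finset S)
    (r := fun a => w a * x a) (f := fun a => w a) (g := fun a => w a * x a ^ 2)
    (fun a _ => hw a) (fun a _ => mul_nonneg (hw a) (sq_nonneg _))
    (fun a _ => by ring)
  rwa [hw1, one_mul] at this

lemma jensen_sqrt (w x : A → ℝ) (hw : ∀ a, 0 ≤ w a) (hx : ∀ a, 0 ≤ x a)
    (hw1 : ∑ a, w a = 1) :
    (∑ a, w a * Real.sqrt (x a)) ^ 2 ≤ ∑ a, w a * x a := by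
  have := Finset.sum_sq_le_sum_mul_sum_of_sq_eq_mul (Finset.univ : Finset A)
    (r := fun a => w a * Real.sqrt (x a)) (f := fun a => w a) (g := fun a => w a * x a)
    (fun a _ => hw a) (fun a _ => mul_nonneg (hw a) (hx a))
    (fun a _ => by rw [mul_pow, Real.sq_sqrt (hx a)]; ring)
  rwa [hw1, one_mul] at this

lemma sum_p_lin (p : S → A → S → ℝ) (hp1 : ∀ s a, ∑ s', p s a s' = 1)
    (s : S) (a : A) (c : ℝ) (g : S → ℝ) :
    ∑ s', p s a s' * (c + g s') = c + ∑ s', p s a s' * g s' := by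
  simp only [mul_add, Finset.sum_add_distrib, ← Finset.sum_mul, hp1, one_mul]

lemma factor_sum (pf : S → ℝ) (w : ℝ) (g : S → ℝ) :
    ∑ s', w * pf s' * g s' = w * ∑ s', pf s' * g s' := by
  rw [Finset.mul_sum]; exact Finset.sum_congr rfl fun _ _ => by ring

end Helpers

section Helpers2
set_option linter.unusedSectionVars false
variable {S A : Type} [Fintype S] [Fintype A]

lemma sum_p_const (p : S → A → S → ℝ) (hp1 : ∀ s a, ∑ s', p s a s' = 1)
    (s : S) (a : A) (c d : ℝ) : ∑ s', c * p s a s' * d = c * d := by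
  have h : ∀ s', c * p s a s' * d = (c * d) * p s a s' := fun _ => by ring
  simp only [h]
  rw [← Finset.mul_sum, hp1, mul_one]

lemma Ex_const_add (b : ℕ → S → A → ℝ) (p : S → A → S → ℝ)
    (hb1 : ∀ t s, ∑ a, b t s a = 1) (hp1 : ∀ s a, ∑ s', p s a s' = 1)
    (n t : ℕ) (s : S) (c : ℝ) (f : Traj S A n → ℝ) :
    Ex b p n t s (fun τ => c + f τ) = c + Ex b p n t s f := by
  unfold Ex
  rw [Finset.sum_congr rfl fun τ _ => (by ring :
    trajP b p n t s τ * (c + f τ) = c * trajP b p n t s τ + trajP b p n t s τ * f τ),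
    Finset.sum_add_distrib, ← Finset.mul_sum, trajP_sum_one b p hb1 hp1, mul_one]

end Helpers2
set_option linter.unusedSectionVars false
section Muhat
open scoped Classical
variable {S A : Type} [Fintype S] [Fintype A]
variable (π μhat : ℕ → S → A → ℝ) (qhat : ℕ → S → A → ℝ)

lemma Z_pos (hπ0 : ∀ t s a, 0 ≤ π t s a) {t : ℕ} {s : S}
    (h : ∃ a₀, π t s a₀ * Real.sqrt (qhat t s a₀) ≠ 0) :
    0 < ∑ b, π t s b * Real.sqrt (qhat t s b) := by
  obtain ⟨a₀, ha₀⟩ := h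
  have hnn : ∀ a : A, 0 ≤ π t s a * Real.sqrt (qhat t s a) :=
    fun a => mul_nonneg (hπ0 t s a) (Real.sqrt_nonneg _)
  have h0 : 0 < π t s a₀ * Real.sqrt (qhat t s a₀) := lt_of_le_of_ne (hnn a₀) (Ne.symm ha₀)
  have h2 := Finset.single_le_sum (f := fun a => π t s a * Real.sqrt (qhat t s a))
    (fun a _ => hnn a) (Finset.mem_univ a₀)
  linarith

lemma cardA_pos (hπ1 : ∀ t s, ∑ a, π t s a = 1) (s : S) : 0 < (Fintype.card A : ℝ) := by
  have h := hπ1 0 s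
  rcases Nat.eq_zero_or_pos (Fintype.card A) with h0 | h0
  · rw [Fintype.card_eq_zero_iff] at h0
    rw [Finset.univ_eq_empty, Finset.sum_empty] at h
    norm_num at h
  · exact_mod_cast h0

lemma muhat_nonneg (hπ0 : ∀ t s a, 0 ≤ π t s a)
    (hμhat : ∀ t s a, μhat t s a =
      if ∃ a₀, π t s a₀ * Real.sqrt (qhat t s a₀) ≠ 0
      then π t s a * Real.sqrt (qhat t s a) / ∑ b, π t s b * Real.sqrt (qhat t s b)
      else 1 / (Fintype.card A : ℝ)) :
    ∀ t s a, 0 ≤ μhat t s a := by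
  intro t s a
  rw [hμhat]
  split_ifs with h
  · exact div_nonneg (mul_nonneg (hπ0 t s a) (Real.sqrt_nonneg _))
      (le_of_lt (Z_pos π qhat hπ0 h))
  · positivity

lemma muhat_sum_one (hπ0 : ∀ t s a, 0 ≤ π t s a) (hπ1 : ∀ t s, ∑ a, π t s a = 1)
    (hμhat : ∀ t s a, μhat t s a =
      if ∃ a₀, π t s a₀ * Real.sqrt (qhat t s a₀) ≠ 0
      then π t s a * Real.sqrt (qhat t s a) / ∑ b, π t s b * Real.sqrt (qhat t s b)
      else 1 / (Fintype.card A : ℝ)) :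
    ∀ t s, ∑ a, μhat t s a = 1 := by
  intro t s
  simp only [hμhat]
  split_ifs with h
  · rw [← Finset.sum_div, div_self (ne_of_gt (Z_pos π qhat hπ0 h))]
  · rw [Finset.sum_const, Finset.card_univ, nsmul_eq_mul, mul_one_div,
      div_self (ne_of_gt (cardA_pos π hπ1 s))]

lemma muhat_zero (hπ0 : ∀ t s a, 0 ≤ π t s a)
    (hμhat : ∀ t s a, μhat t s a =
      if ∃ a₀, π t s a₀ * Real.sqrt (qhat t s a₀) ≠ 0
      then π t s a * Real.sqrt (qhat t s a) / ∑ b, π t s b * Real.sqrt (qhat t s b)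
      else 1 / (Fintype.card A : ℝ)) :
    ∀ t s a, μhat t s a = 0 → π t s a * Real.sqrt (qhat t s a) = 0 := by
  intro t s a h0
  rw [hμhat] at h0
  split_ifs at h0 with h
  · rcases div_eq_zero_iff.mp h0 with h1 | h1
    · exact h1
    · exact absurd h1 (ne_of_gt (Z_pos π qhat hπ0 h))
  · push_neg at h
    exact h a

/-- From `π√q̂ = 0` and `q² ≤ q̂`, conclude `π q = 0` and `π² q̂ = 0`. -/
lemma zero_help {π₀ q₀ qhat₀ : ℝ} (hπ0 : 0 ≤ π₀) (hC : q₀ ^ 2 ≤ qhat₀)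
    (h : π₀ * Real.sqrt qhat₀ = 0) : π₀ * q₀ = 0 ∧ π₀ ^ 2 * qhat₀ = 0 := by
  rcases mul_eq_zero.mp h with h1 | h1
  · rw [h1]; simp
  · have hle : qhat₀ ≤ 0 := Real.sqrt_eq_zero'.mp h1
    have hq0 : q₀ = 0 := by nlinarith [sq_nonneg q₀]
    have hqh : qhat₀ = 0 := le_antisymm hle (by nlinarith [sq_nonneg q₀])
    simp [hq0, hqh]

end Muhat
section Main
set_option linter.unusedSectionVars false
set_option maxHeartbeats 1000000
open scoped Classical
variable {S A : Type} [Fintype S] [Fintype A]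

lemma main_ind (T : ℕ) (p : S → A → S → ℝ) (r : S → A → ℝ)
    (π μhat : ℕ → S → A → ℝ) (v : ℕ → S → ℝ) (q qhat : ℕ → S → A → ℝ)
    (hp0 : ∀ s a s', 0 ≤ p s a s') (hp1 : ∀ s a, ∑ s', p s a s' = 1)
    (hπ0 : ∀ t s a, 0 ≤ π t s a) (hπ1 : ∀ t s, ∑ a, π t s a = 1)
    (hvT : ∀ s, v T s = 0)
    (hq : ∀ t, t < T → ∀ s a, q t s a = r s a + ∑ s', p s a s' * v (t+1) s')
    (hv : ∀ t, t < T → ∀ s, v t s = ∑ a, π t s a * q t s a)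
    (hqhatT : ∀ s a, qhat (T - 1) s a = 2 * r s a * q (T - 1) s a - (r s a) ^ 2)
    (hqhat : ∀ t, t + 1 < T → ∀ s a, qhat t s a
      = (2 * r s a * q t s a - (r s a) ^ 2)
        + ∑ s', ∑ a', p s a s' * π (t+1) s' a' * qhat (t+1) s' a')
    (hμhat : ∀ t s a, μhat t s a =
      if ∃ a₀, π t s a₀ * Real.sqrt (qhat t s a₀) ≠ 0
      then π t s a * Real.sqrt (qhat t s a) / ∑ b, π t s b * Real.sqrt (qhat t s b)
      else 1 / (Fintype.card A : ℝ)) :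
    ∀ n, 1 ≤ n → ∀ t, t + n = T →
      (∀ s, Ex π p n t s (retG r n s) = v t s) ∧
      (∀ s, Ex π p n t s (fun τ => (retG r n s τ)^2) = ∑ a, π t s a * qhat t s a) ∧
      (∀ s a, q t s a ^ 2 ≤ qhat t s a) ∧
      (∀ s, Ex μhat p n t s (pdis π μhat r n t s) = v t s) ∧
      (∀ s, Ex μhat p n t s (fun τ => (pdis π μhat r n t s τ)^2)
         ≤ (∑ a, π t s a * Real.sqrt (qhat t s a))^2) := by
  have hμ1 : ∀ t s, ∑ a, μhat t s a = 1 := muhat_sum_one π μhat qhat hπ0 hπ1 hμhat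
  have hμ0 : ∀ t s a, 0 ≤ μhat t s a := muhat_nonneg π μhat qhat hπ0 hμhat
  intro n
  induction n with
  | zero => intro h; omega
  | succ m ih =>
    intro _ t htn
    rcases Nat.eq_zero_or_pos m with hm | hm
    · -- base case n = 1
      subst hm
      have ht : t < T := by omega
      have ht1 : t + 1 = T := by omega
      have hT1 : T - 1 = t := by omega
      have hvs : ∀ s', v (t+1) s' = 0 := fun s' => by rw [ht1]; exact hvT s'
      have hqr : ∀ s a, q t s a = r s a := by
        intro s a
        rw [hq t ht s a, Finset.sum_congr rfl fun s' _ => by rw [hvs, mul_zero]]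
        simp
      have hqh : ∀ s a, qhat t s a = r s a ^ 2 := by
        intro s a
        have h2 := hqhatT s a
        rw [hT1] at h2
        rw [h2, hqr]; ring
      have hCt : ∀ s a, q t s a ^ 2 ≤ qhat t s a := by
        intro s a; rw [hqr, hqh]
      have hπr0 : ∀ s a, μhat t s a = 0 → π t s a * r s a = 0 := by
        intro s a hμ
        have h0 := muhat_zero π μhat qhat hπ0 hμhat t s a hμ
        rw [hqh, Real.sqrt_sq_eq_abs] at h0
        have h2 : |π t s a * r s a| = 0 := by
          rw [abs_mul, abs_of_nonneg (hπ0 t s a)]; exact h0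
        exact abs_eq_zero.mp h2
      refine ⟨?_, ?_, hCt, ?_, ?_⟩
      · -- A
        intro s
        rw [Ex_succ, hv t ht]
        refine Finset.sum_congr rfl fun a _ => ?_
        have hE : ∀ s', Ex π p 0 (t+1) s' (fun τ => retG r 1 s (a, s', τ)) = r s a := by
          intro s'; rw [Ex_zero]; simp [retG]
        rw [Finset.sum_congr rfl fun s' _ => by rw [hE],
          sum_p_const p hp1 s a, hqr]
      · -- B
        intro s
        rw [Ex_succ]
        refine Finset.sum_congr rfl fun a _ => ?_
        have hE : ∀ s', Ex π p 0 (t+1) s' (fun τ => (retG r 1 s (a, s', τ))^2)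
            = r s a ^ 2 := by
          intro s'; rw [Ex_zero]; simp [retG]
        rw [Finset.sum_congr rfl fun s' _ => by rw [hE],
          sum_p_const p hp1 s a, hqh]
      · -- D
        intro s
        rw [Ex_succ, hv t ht]
        refine Finset.sum_congr rfl fun a _ => ?_
        have hE : ∀ s', Ex μhat p 0 (t+1) s' (fun τ => pdis π μhat r 1 t s (a, s', τ))
            = π t s a / μhat t s a * (r s a + 0) := by
          intro s'; rw [Ex_zero]; simp [pdis]
        rw [Finset.sum_congr rfl fun s' _ => by rw [hE], sum_p_const p hp1 s a, hqr]
        by_cases hμ : μhat t s a = 0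
        · rw [hμ, hπr0 s a hμ]; ring
        · rw [add_zero, ← mul_assoc, mul_comm (μhat t s a) _, div_mul_cancel₀ _ hμ]
      · -- E (base): exact equality, proven via per-term computation
        intro s
        apply le_of_eq
        rw [Ex_succ]
        have hE : ∀ a s', Ex μhat p 0 (t+1) s' (fun τ => (pdis π μhat r 1 t s (a, s', τ))^2)
            = (π t s a / μhat t s a * (r s a + 0))^2 := by
          intro a s'; rw [Ex_zero]; simp [pdis]
        have key : ∀ a, μhat t s a * (π t s a / μhat t s a * (r s a + 0))^2
            = (π t s a * Real.sqrt (qhat t s a)) * ∑ b, π t s b * Real.sqrt (qhat t s b) := by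
          intro a
          by_cases hμ : μhat t s a = 0
          · rw [hμ, muhat_zero π μhat qhat hπ0 hμhat t s a hμ]; ring
          · have hsp := hμhat t s a
            rw [hqh, Real.sqrt_sq_eq_abs] at hsp ⊢
            split_ifs at hsp with hif
            · have hZ : 0 < ∑ b, π t s b * Real.sqrt (qhat t s b) := Z_pos π qhat hπ0 hif
              have hZ' : (∑ b, π t s b * Real.sqrt (qhat t s b)) ≠ 0 := ne_of_gt hZ
              have hnum : π t s a * |r s a| ≠ 0 := by
                intro hc; rw [hsp, hc, zero_div] at hμ; exact hμ rfl
              have hπa : π t s a ≠ 0 := fun hc => hnum (by rw [hc, zero_mul])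
              have hra : |r s a| ≠ 0 := fun hc => hnum (by rw [hc, mul_zero])
              rw [hsp, add_zero, mul_pow]
              field_simp
              linear_combination (-1 : ℝ) * sq_abs (r s a)
            · push_neg at hif
              have h0 := hif a
              rw [hqh, Real.sqrt_sq_eq_abs] at h0
              have hr0 : π t s a * r s a = 0 := by
                have h2 : |π t s a * r s a| = 0 := by
                  rw [abs_mul, abs_of_nonneg (hπ0 t s a)]; exact h0
                exact abs_eq_zero.mp h2
              have hL : μhat t s a * (π t s a / μhat t s a * (r s a + 0))^2
                  = (π t s a * r s a)^2 / μhat t s a := by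
                field_simp; ring
              rw [hL, hr0, h0]
              simp
        rw [Finset.sum_congr rfl fun a _ => by
          rw [Finset.sum_congr rfl fun s' _ => by rw [hE], sum_p_const p hp1 s a, key],
          ← Finset.sum_mul, sq]
    · -- inductive step
      obtain ⟨ihA, ihB, ihC, ihD, ihE⟩ := ih hm (t+1) (by omega)
      have ht : t < T := by omega
      have ht1 : t + 1 < T := by omega
      have hqt := hq t ht
      have hqh0 : ∀ s' a', 0 ≤ qhat (t+1) s' a' :=
        fun s' a' => le_trans (sq_nonneg _) (ihC s' a')
      have hCt : ∀ s a, q t s a ^ 2 ≤ qhat t s a := by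
        intro s a
        have h1 : ∀ s', v (t+1) s' ^ 2 ≤ ∑ a', π (t+1) s' a' * qhat (t+1) s' a' := by
          intro s'
          calc v (t+1) s' ^ 2 = (∑ a', π (t+1) s' a' * q (t+1) s' a') ^ 2 := by
                rw [hv (t+1) ht1 s']
            _ ≤ ∑ a', π (t+1) s' a' * q (t+1) s' a' ^ 2 :=
                jensen_sq _ _ (hπ0 (t+1) s') (hπ1 (t+1) s')
            _ ≤ ∑ a', π (t+1) s' a' * qhat (t+1) s' a' :=
                Finset.sum_le_sum fun a' _ =>
                  mul_le_mul_of_nonneg_left (ihC s' a') (hπ0 (t+1) s' a')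
        have h2 : (∑ s', p s a s' * v (t+1) s') ^ 2 ≤ ∑ s', p s a s' * v (t+1) s' ^ 2 :=
          jensen_sq' _ _ (hp0 s a) (hp1 s a)
        have h3 : ∑ s', p s a s' * v (t+1) s' ^ 2
            ≤ ∑ s', p s a s' * ∑ a', π (t+1) s' a' * qhat (t+1) s' a' :=
          Finset.sum_le_sum fun s' _ => mul_le_mul_of_nonneg_left (h1 s') (hp0 s a s')
        have h4 : qhat t s a = 2 * r s a * q t s a - r s a ^ 2
            + ∑ s', p s a s' * ∑ a', π (t+1) s' a' * qhat (t+1) s' a' := by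
          rw [hqhat t ht1 s a]
          congr 1
          refine Finset.sum_congr rfl fun s' _ => ?_
          rw [Finset.mul_sum]
          exact Finset.sum_congr rfl fun a' _ => by ring
        have h6 : q t s a ^ 2 = 2 * r s a * q t s a - r s a ^ 2
            + (∑ s', p s a s' * v (t+1) s') ^ 2 := by
          rw [hqt s a]; ring
        rw [h4]
        linarith [h2, h3, h6]
      have h7 : ∀ s a, ∑ s', p s a s' * (2 * r s a * v (t+1) s'
            + ∑ a', π (t+1) s' a' * qhat (t+1) s' a')
          = 2 * r s a * (∑ s', p s a s' * v (t+1) s')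
            + ∑ s', ∑ a', p s a s' * π (t+1) s' a' * qhat (t+1) s' a' := by
        intro s a
        have hterm : ∀ s', p s a s' * (2 * r s a * v (t+1) s'
              + ∑ a', π (t+1) s' a' * qhat (t+1) s' a')
            = 2 * r s a * (p s a s' * v (t+1) s')
              + ∑ a', p s a s' * π (t+1) s' a' * qhat (t+1) s' a' := by
          intro s'
          rw [mul_add]
          congr 1
          · ring
          · rw [Finset.mul_sum]
            exact Finset.sum_congr rfl fun a' _ => by ring
        rw [Finset.sum_congr rfl fun s' _ => hterm s', Finset.sum_add_distrib, ← Finset.mul_sum]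
      have hqh_exp : ∀ s a, qhat t s a = r s a ^ 2
          + ∑ s', p s a s' * (2 * r s a * v (t+1) s'
            + ∑ a', π (t+1) s' a' * qhat (t+1) s' a') := by
        intro s a
        rw [hqhat t ht1 s a, h7 s a]
        linear_combination (2 * r s a) * hqt s a
      have hA : ∀ s, Ex π p (m+1) t s (retG r (m+1) s) = v t s := by
        intro s
        rw [Ex_succ, hv t ht]
        refine Finset.sum_congr rfl fun a _ => ?_
        have hE : ∀ s', Ex π p m (t+1) s' (fun τ => retG r (m+1) s (a, s', τ))
            = r s a + v (t+1) s' := by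
          intro s'
          have hfun : (fun τ : Traj S A m => retG r (m+1) s (a, s', τ))
              = fun τ => r s a + retG r m s' τ := by
            funext τ; simp [retG]
          rw [hfun, Ex_const_add π p hπ1 hp1, ihA s']
        rw [Finset.sum_congr rfl fun s' _ => by rw [hE],
          factor_sum (p s a) (π t s a) (fun s' => r s a + v (t+1) s'),
          sum_p_lin p hp1 s a, ← hqt s a]
      have hB : ∀ s, Ex π p (m+1) t s (fun τ => (retG r (m+1) s τ)^2)
          = ∑ a, π t s a * qhat t s a := by
        intro s
        rw [Ex_succ]
        refine Finset.sum_congr rfl fun a _ => ?_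
        have hE : ∀ s', Ex π p m (t+1) s' (fun τ => (retG r (m+1) s (a, s', τ))^2)
            = r s a ^ 2 + (2 * r s a * v (t+1) s'
                + ∑ a', π (t+1) s' a' * qhat (t+1) s' a') := by
          intro s'
          have hfun : (fun τ : Traj S A m => (retG r (m+1) s (a, s', τ))^2)
              = fun τ => r s a ^ 2 + (2 * r s a * retG r m s' τ + (retG r m s' τ)^2) := by
            funext τ; simp [retG]; ring
          rw [hfun, Ex_const_add π p hπ1 hp1, Ex_add, Ex_const_mul, ihA s', ihB s']
        rw [Finset.sum_congr rfl fun s' _ => by rw [hE],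
          factor_sum (p s a) (π t s a), sum_p_lin p hp1 s a, hqh_exp s a]
      have hD : ∀ s, Ex μhat p (m+1) t s (pdis π μhat r (m+1) t s) = v t s := by
        intro s
        rw [Ex_succ, hv t ht]
        refine Finset.sum_congr rfl fun a _ => ?_
        have hE : ∀ s', Ex μhat p m (t+1) s' (fun τ => pdis π μhat r (m+1) t s (a, s', τ))
            = π t s a / μhat t s a * (r s a + v (t+1) s') := by
          intro s'
          have hfun : (fun τ : Traj S A m => pdis π μhat r (m+1) t s (a, s', τ))
              = fun τ => π t s a / μhat t s a * (r s a + pdis π μhat r m (t+1) s' τ) := by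
            funext τ; simp [pdis]
          rw [hfun, Ex_const_mul, Ex_const_add μhat p hμ1 hp1, ihD s']
        rw [Finset.sum_congr rfl fun s' _ => by rw [hE]]
        rw [Finset.sum_congr rfl fun s' _ => (by ring :
          μhat t s a * p s a s' * (π t s a / μhat t s a * (r s a + v (t+1) s'))
            = (μhat t s a * (π t s a / μhat t s a)) * p s a s' * (r s a + v (t+1) s'))]
        rw [factor_sum (p s a) _ (fun s' => r s a + v (t+1) s'),
          sum_p_lin p hp1 s a, ← hqt s a]
        by_cases hμ : μhat t s a = 0
        · have h0 := (zero_help (hπ0 t s a) (hCt s a)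
            (muhat_zero π μhat qhat hπ0 hμhat t s a hμ)).1
          rw [hμ, h0]
          ring
        · rw [mul_comm (μhat t s a), div_mul_cancel₀ _ hμ]
      refine ⟨hA, hB, hCt, hD, ?_⟩
      intro s
      rw [Ex_succ]
      have hM' : ∀ s', Ex μhat p m (t+1) s' (fun τ => (pdis π μhat r m (t+1) s' τ)^2)
          ≤ ∑ a', π (t+1) s' a' * qhat (t+1) s' a' := by
        intro s'
        refine le_trans (ihE s') ?_
        exact jensen_sqrt _ _ (hπ0 (t+1) s') (hqh0 s') (hπ1 (t+1) s')
      have hE : ∀ a s', Ex μhat p m (t+1) s' (fun τ => (pdis π μhat r (m+1) t s (a, s', τ))^2)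
          = (π t s a / μhat t s a)^2 * (r s a ^ 2 + (2 * r s a * v (t+1) s'
              + Ex μhat p m (t+1) s' (fun τ => (pdis π μhat r m (t+1) s' τ)^2))) := by
        intro a s'
        have hfun : (fun τ : Traj S A m => (pdis π μhat r (m+1) t s (a, s', τ))^2)
            = fun τ => (π t s a / μhat t s a)^2 * (r s a ^ 2
                + (2 * r s a * pdis π μhat r m (t+1) s' τ
                  + (pdis π μhat r m (t+1) s' τ)^2)) := by
          funext τ; simp [pdis]; ring
        rw [hfun, Ex_const_mul, Ex_const_add μhat p hμ1 hp1, Ex_add, Ex_const_mul, ihD s']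
      have step1 : ∀ a, ∑ s', μhat t s a * p s a s' *
            ((π t s a / μhat t s a)^2 * (r s a ^ 2 + (2 * r s a * v (t+1) s'
              + Ex μhat p m (t+1) s' (fun τ => (pdis π μhat r m (t+1) s' τ)^2))))
          = (μhat t s a * (π t s a / μhat t s a)^2) * (r s a ^ 2
              + ∑ s', p s a s' * (2 * r s a * v (t+1) s'
                + Ex μhat p m (t+1) s' (fun τ => (pdis π μhat r m (t+1) s' τ)^2))) := by
        intro a
        rw [Finset.sum_congr rfl fun s' _ => (by ring :
          μhat t s a * p s a s' * ((π t s a / μhat t s a)^2 * (r s a ^ 2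
              + (2 * r s a * v (t+1) s'
                + Ex μhat p m (t+1) s' (fun τ => (pdis π μhat r m (t+1) s' τ)^2))))
            = (μhat t s a * (π t s a / μhat t s a)^2) * p s a s' * (r s a ^ 2
              + (2 * r s a * v (t+1) s'
                + Ex μhat p m (t+1) s' (fun τ => (pdis π μhat r m (t+1) s' τ)^2))))]
        rw [factor_sum (p s a) _ (fun s' => r s a ^ 2 + (2 * r s a * v (t+1) s'
            + Ex μhat p m (t+1) s' (fun τ => (pdis π μhat r m (t+1) s' τ)^2)))]
        congr 1
        rw [Finset.sum_congr rfl fun s' _ => (rfl :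
          p s a s' * (r s a ^ 2 + (2 * r s a * v (t+1) s'
            + Ex μhat p m (t+1) s' (fun τ => (pdis π μhat r m (t+1) s' τ)^2)))
          = p s a s' * (r s a ^ 2 + (2 * r s a * v (t+1) s'
            + Ex μhat p m (t+1) s' (fun τ => (pdis π μhat r m (t+1) s' τ)^2)))),
          sum_p_lin p hp1 s a]
      have c_nonneg : ∀ a, 0 ≤ μhat t s a * (π t s a / μhat t s a)^2 :=
        fun a => mul_nonneg (hμ0 t s a) (sq_nonneg _)
      have inner_le : ∀ a, r s a ^ 2 + ∑ s', p s a s' * (2 * r s a * v (t+1) s'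
            + Ex μhat p m (t+1) s' (fun τ => (pdis π μhat r m (t+1) s' τ)^2))
          ≤ qhat t s a := by
        intro a
        rw [hqh_exp s a]
        refine add_le_add_right (Finset.sum_le_sum fun s' _ => ?_) _
        exact mul_le_mul_of_nonneg_left (add_le_add_right (hM' s') _) (hp0 s a s')
      have key_le : ∀ a, (μhat t s a * (π t s a / μhat t s a)^2) * qhat t s a
          ≤ (π t s a * Real.sqrt (qhat t s a)) * ∑ b, π t s b * Real.sqrt (qhat t s b) := by
        intro a
        by_cases hμ : μhat t s a = 0
        · rw [hμ, muhat_zero π μhat qhat hπ0 hμhat t s a hμ]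
          simp
        · have hq0 : 0 ≤ qhat t s a := le_trans (sq_nonneg _) (hCt s a)
          have hu2 : Real.sqrt (qhat t s a) ^ 2 = qhat t s a := Real.sq_sqrt hq0
          have hsp := hμhat t s a
          split_ifs at hsp with hif
          · apply le_of_eq
            have hZ : 0 < ∑ b, π t s b * Real.sqrt (qhat t s b) := Z_pos π qhat hπ0 hif
            have hZ' : (∑ b, π t s b * Real.sqrt (qhat t s b)) ≠ 0 := ne_of_gt hZ
            have hnum : π t s a * Real.sqrt (qhat t s a) ≠ 0 := by
              intro hc; rw [hsp, hc, zero_div] at hμ; exact hμ rfl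
            have hπa : π t s a ≠ 0 := fun hc => hnum (by rw [hc, zero_mul])
            have hua : Real.sqrt (qhat t s a) ≠ 0 := fun hc => hnum (by rw [hc, mul_zero])
            set u := Real.sqrt (qhat t s a) with hu
            rw [hsp, ← hu2]
            field_simp
          · push_neg at hif
            have h0 := hif a
            have hpq := (zero_help (hπ0 t s a) (hCt s a) h0).2
            have hL : μhat t s a * (π t s a / μhat t s a)^2 * qhat t s a
                = (π t s a ^ 2 * qhat t s a) / μhat t s a := by
              field_simp
            rw [hL, hpq, zero_div, h0, zero_mul]
      have hbound : ∀ a, (μhat t s a * (π t s a / μhat t s a)^2) * (r s a ^ 2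
            + ∑ s', p s a s' * (2 * r s a * v (t+1) s'
              + Ex μhat p m (t+1) s' (fun τ => (pdis π μhat r m (t+1) s' τ)^2)))
          ≤ (π t s a * Real.sqrt (qhat t s a)) * ∑ b, π t s b * Real.sqrt (qhat t s b) :=
        fun a => le_trans (mul_le_mul_of_nonneg_left (inner_le a) (c_nonneg a)) (key_le a)
      calc (∑ a, ∑ s', μhat t s a * p s a s' * Ex μhat p m (t+1) s'
              (fun τ => (pdis π μhat r (m+1) t s (a, s', τ))^2))
          = ∑ a, (μhat t s a * (π t s a / μhat t s a)^2) * (r s a ^ 2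
              + ∑ s', p s a s' * (2 * r s a * v (t+1) s'
                + Ex μhat p m (t+1) s' (fun τ => (pdis π μhat r m (t+1) s' τ)^2))) := by
            refine Finset.sum_congr rfl fun a _ => ?_
            rw [Finset.sum_congr rfl fun s' _ => by rw [hE a s'], step1 a]
        _ ≤ ∑ a, (π t s a * Real.sqrt (qhat t s a)) * ∑ b, π t s b * Real.sqrt (qhat t s b) :=
            Finset.sum_le_sum fun a _ => hbound a
        _ = (∑ a, π t s a * Real.sqrt (qhat t s a))^2 := by rw [← Finset.sum_mul, sq]

end Main
section Final
set_option linter.unusedSectionVars false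
set_option maxHeartbeats 1000000
open scoped Classical
variable {S A : Type} [Fintype S] [Fintype A]

lemma baseE (T : ℕ) (p : S → A → S → ℝ) (r : S → A → ℝ)
    (π μhat : ℕ → S → A → ℝ) (v : ℕ → S → ℝ) (q qhat : ℕ → S → A → ℝ)
    (hp1 : ∀ s a, ∑ s', p s a s' = 1)
    (hπ0 : ∀ t s a, 0 ≤ π t s a)
    (hvT : ∀ s, v T s = 0)
    (hq : ∀ t, t < T → ∀ s a, q t s a = r s a + ∑ s', p s a s' * v (t+1) s')
    (hqhatT : ∀ s a, qhat (T - 1) s a = 2 * r s a * q (T - 1) s a - (r s a) ^ 2)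
    (hμhat : ∀ t s a, μhat t s a =
      if ∃ a₀, π t s a₀ * Real.sqrt (qhat t s a₀) ≠ 0
      then π t s a * Real.sqrt (qhat t s a) / ∑ b, π t s b * Real.sqrt (qhat t s b)
      else 1 / (Fintype.card A : ℝ))
    (t : ℕ) (ht1 : t + 1 = T) :
    ∀ s, Ex μhat p 1 t s (fun τ => (pdis π μhat r 1 t s τ)^2)
      = (∑ a, π t s a * Real.sqrt (qhat t s a))^2 := by
  have ht : t < T := by omega
  have hT1 : T - 1 = t := by omega
  have hvs : ∀ s', v (t+1) s' = 0 := fun s' => by rw [ht1]; exact hvT s'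
  have hqr : ∀ s a, q t s a = r s a := by
    intro s a
    rw [hq t ht s a, Finset.sum_congr rfl fun s' _ => by rw [hvs, mul_zero]]
    simp
  have hqh : ∀ s a, qhat t s a = r s a ^ 2 := by
    intro s a
    have h2 := hqhatT s a
    rw [hT1] at h2
    rw [h2, hqr]; ring
  intro s
  rw [Ex_succ]
  have hE : ∀ a s', Ex μhat p 0 (t+1) s' (fun τ => (pdis π μhat r 1 t s (a, s', τ))^2)
      = (π t s a / μhat t s a * (r s a + 0))^2 := by
    intro a s'; rw [Ex_zero]; simp [pdis]
  have key : ∀ a, μhat t s a * (π t s a / μhat t s a * (r s a + 0))^2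
      = (π t s a * Real.sqrt (qhat t s a)) * ∑ b, π t s b * Real.sqrt (qhat t s b) := by
    intro a
    by_cases hμ : μhat t s a = 0
    · rw [hμ, muhat_zero π μhat qhat hπ0 hμhat t s a hμ]; ring
    · have hsp := hμhat t s a
      rw [hqh, Real.sqrt_sq_eq_abs] at hsp ⊢
      split_ifs at hsp with hif
      · have hZ : 0 < ∑ b, π t s b * Real.sqrt (qhat t s b) := Z_pos π qhat hπ0 hif
        have hZ' : (∑ b, π t s b * Real.sqrt (qhat t s b)) ≠ 0 := ne_of_gt hZ
        have hnum : π t s a * |r s a| ≠ 0 := by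
          intro hc; rw [hsp, hc, zero_div] at hμ; exact hμ rfl
        have hπa : π t s a ≠ 0 := fun hc => hnum (by rw [hc, zero_mul])
        have hra : |r s a| ≠ 0 := fun hc => hnum (by rw [hc, mul_zero])
        rw [hsp, add_zero, mul_pow]
        field_simp
        linear_combination (-1 : ℝ) * sq_abs (r s a)
      · push_neg at hif
        have h0 := hif a
        rw [hqh, Real.sqrt_sq_eq_abs] at h0
        have hr0 : π t s a * r s a = 0 := by
          have h2 : |π t s a * r s a| = 0 := by
            rw [abs_mul, abs_of_nonneg (hπ0 t s a)]; exact h0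
          exact abs_eq_zero.mp h2
        have hL : μhat t s a * (π t s a / μhat t s a * (r s a + 0))^2
            = (π t s a * r s a)^2 / μhat t s a := by
          field_simp; ring
        rw [hL, hr0, h0]
        simp
  rw [Finset.sum_congr rfl fun a _ => by
    rw [Finset.sum_congr rfl fun s' _ => by rw [hE], sum_p_const p hp1 s a, key],
    ← Finset.sum_mul, sq]

end Final
open scoped Classical in
/-- Variance reduction: the PDIS estimator under the behavior policy
`μ̂_t(a|s) ∝ π_t(a|s)√(q̂_{π,t}(s,a))` has variance no larger than the on-policy
Monte Carlo estimator; with the explicit value at `t = T-1`. -/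
theorem muhat_variance_reduction {S A : Type} [Fintype S] [Fintype A]
    (T : ℕ) (hT : 1 ≤ T) (p : S → A → S → ℝ) (r : S → A → ℝ)
    (π μhat : ℕ → S → A → ℝ)
    (v : ℕ → S → ℝ) (q qhat : ℕ → S → A → ℝ)
    (hp0 : ∀ s a s', 0 ≤ p s a s') (hp1 : ∀ s a, ∑ s', p s a s' = 1)
    (hπ0 : ∀ t s a, 0 ≤ π t s a) (hπ1 : ∀ t s, ∑ a, π t s a = 1)
    (hvT : ∀ s, v T s = 0)
    (hq : ∀ t, t < T → ∀ s a, q t s a = r s a + ∑ s', p s a s' * v (t+1) s')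
    (hv : ∀ t, t < T → ∀ s, v t s = ∑ a, π t s a * q t s a)
    (hqhatT : ∀ s a, qhat (T - 1) s a = 2 * r s a * q (T - 1) s a - (r s a) ^ 2)
    (hqhat : ∀ t, t + 1 < T → ∀ s a, qhat t s a
      = (2 * r s a * q t s a - (r s a) ^ 2)
        + ∑ s', ∑ a', p s a s' * π (t+1) s' a' * qhat (t+1) s' a')
    (hμhat : ∀ t s a, μhat t s a =
      if ∃ a₀, π t s a₀ * Real.sqrt (qhat t s a₀) ≠ 0
      then π t s a * Real.sqrt (qhat t s a) / ∑ b, π t s b * Real.sqrt (qhat t s b)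
      else 1 / (Fintype.card A : ℝ)) :
    (∀ t, t < T → ∀ s,
      VarTraj μhat p (T - t) t s (pdis π μhat r (T - t) t s)
        ≤ VarTraj π p (T - t) t s (retG r (T - t) s)) ∧
    (∀ s, VarTraj μhat p 1 (T - 1) s (pdis π μhat r 1 (T - 1) s)
        = (∑ a, π (T - 1) s a * Real.sqrt (qhat (T - 1) s a)) ^ 2
          - (v (T - 1) s) ^ 2) := by
  have main := main_ind T p r π μhat v q qhat hp0 hp1 hπ0 hπ1 hvT hq hv hqhatT hqhat hμhat
  constructor
  · intro t ht s
    obtain ⟨hA, hB, hC, hD, hEe⟩ := main (T - t) (by omega) t (by omega)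
    have hZM : (∑ a, π t s a * Real.sqrt (qhat t s a))^2 ≤ ∑ a, π t s a * qhat t s a :=
      jensen_sqrt _ _ (hπ0 t s) (fun a => le_trans (sq_nonneg _) (hC s a)) (hπ1 t s)
    unfold VarTraj
    rw [hA s, hB s, hD s]
    linarith [hEe s]
  · intro s
    have ht1 : (T - 1) + 1 = T := by omega
    obtain ⟨hA, hB, hC, hD, hEe⟩ := main 1 le_rfl (T - 1) ht1
    unfold VarTraj
    rw [hD s, baseE T p r π μhat v q qhat hp1 hπ0 hvT hq hqhatT hμhat (T - 1) ht1 s]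
end
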